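/- arXiv:2509.05678 — 2 statements merged into one kernel-verified Lean document; each statement's English description precedes it below -/
import Mathlib

section
/- For the default weight w(t) = 1/(1+t²) − 1 with centered version w̃_{ij} = w(|i−j|) − w₁·1{i≠j}/(n(n−1)), one has lim_{n→∞} (1/n) Σ_{i=1}^n Σ_{j=1}^n w̃_{ij}² = 2 Σ_{t=1}^∞ 1/(1+t²)². -/
open Finset Filter

/-- The default weight `w(t) = 1/(1+t²) − 1`. -/
noncomputable def wDefault (t : ℕ) : ℝ := 1 / (1 + (t : ℝ) ^ 2) - 1

/-- `w₁ = Σ_{i≠j} w(|i−j|)` for the default weight. -/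
noncomputable def wOne (n : ℕ) : ℝ :=
  ∑ i : Fin n, ∑ j : Fin n,
    if i = j then 0 else wDefault (((i : ℕ) : ℤ) - ((j : ℕ) : ℤ)).natAbs

/-- Centered default weights `w̃_{ij} = w(|i−j|) − w₁·1{i≠j}/(n(n−1))`. -/
noncomputable def wTilde (n : ℕ) (i j : Fin n) : ℝ :=
  wDefault (((i : ℕ) : ℤ) - ((j : ℕ) : ℤ)).natAbs -
    (if i = j then 0 else wOne n / ((n : ℝ) * ((n : ℝ) - 1)))

open Topology

/-! Off the diagonal `w(|i-j|) = p(|i-j|) - 1` with `p(t) = 1/(1+t²)`, so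
`w̃_{ij} = p(|i-j|) - 1{i≠j} (Σ p)/(n(n-1))` is `p` centered over the off-diagonal pairs, and
`Σ w̃² = Σ p² - (Σ p)²/(n(n-1))`. A sum `Σ_{i,j<n} f(|i-j|)` with `f 0 = 0` is twice the sum of the
first `n` partial sums of `f`, so for summable `f` it is `2n Σ f + o(n)` by Cesàro. Applied to `p²`
this gives the limit; applied to `p` it makes the correction `(Σ p)²/(n²(n-1))` of order `1/n`. -/

/-- `1/(1+t²)`, set to `0` at `t = 0` so that it vanishes on the diagonal like `wDefault`. -/
noncomputable def cauchyKernel (t : ℕ) : ℝ := if t = 0 then 0 else 1 / (1 + (t : ℝ) ^ 2)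

@[simp]
lemma cauchyKernel_zero : cauchyKernel 0 = 0 := if_pos rfl

lemma cauchyKernel_nonneg (t : ℕ) : 0 ≤ cauchyKernel t := by
  unfold cauchyKernel; split <;> positivity

lemma cauchyKernel_le_one_div_sq (t : ℕ) : cauchyKernel t ≤ 1 / (t : ℝ) ^ 2 := by
  unfold cauchyKernel; split
  · positivity
  · gcongr; linarith

lemma cauchyKernel_le_one (t : ℕ) : cauchyKernel t ≤ 1 := by
  unfold cauchyKernel; split
  · exact zero_le_one
  · rw [div_le_one (by positivity)]; nlinarith

lemma summable_cauchyKernel : Summable cauchyKernel :=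
  (Real.summable_one_div_nat_pow.mpr one_lt_two).of_nonneg_of_le cauchyKernel_nonneg
    cauchyKernel_le_one_div_sq

lemma summable_cauchyKernel_sq : Summable fun t => cauchyKernel t ^ 2 :=
  summable_cauchyKernel.of_nonneg_of_le (fun _ => sq_nonneg _) fun t =>
    pow_le_of_le_one (cauchyKernel_nonneg t) (cauchyKernel_le_one t) two_ne_zero

lemma tsum_cauchyKernel_sq :
    ∑' t, cauchyKernel t ^ 2 = ∑' t : ℕ, 1 / (1 + ((t : ℝ) + 1) ^ 2) ^ 2 := by
  rw [summable_cauchyKernel_sq.tsum_eq_zero_add]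
  simp [cauchyKernel]

lemma wDefault_eq_cauchyKernel_sub (t : ℕ) :
    wDefault t = cauchyKernel t - if t = 0 then 0 else 1 := by
  unfold wDefault cauchyKernel; split <;> simp_all

lemma natAbs_sub_eq_zero_iff {n : ℕ} {i j : Fin n} :
    (((i : ℕ) : ℤ) - ((j : ℕ) : ℤ)).natAbs = 0 ↔ i = j := by
  rw [Fin.ext_iff]; omega

lemma sum_sq_sub_indicator_mean {ι : Type*} [Fintype ι] [DecidableEq ι] (s : Finset ι)
    (f : ι → ℝ) (hf : ∀ x ∉ s, f x = 0) :
    ∑ x, (f x - if x ∈ s then (∑ y, f y) / #s else 0) ^ 2 =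
      ∑ x, f x ^ 2 - (∑ x, f x) ^ 2 / #s := by
  set c := (∑ y, f y) / #s
  have hpt : ∀ x, (f x - if x ∈ s then c else 0) ^ 2 =
      f x ^ 2 - 2 * c * f x + c ^ 2 * if x ∈ s then 1 else 0 := by
    intro x
    by_cases hx : x ∈ s
    · simp only [hx, if_true]; ring
    · simp [hx, hf x hx]
  simp only [hpt, sum_add_distrib, sum_sub_distrib, ← mul_sum, sum_boole, filter_mem_eq_inter,
    univ_inter]
  rcases (Nat.cast_nonneg (α := ℝ) #s).eq_or_lt with hs | hs
  · simp [c, ← hs]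
  · simp only [c]; field_simp; ring

lemma sum_range_natAbs_sub (f : ℕ → ℝ) (hf : f 0 = 0) (n : ℕ) :
    ∑ i ∈ range n, ∑ j ∈ range n, f ((i : ℤ) - j).natAbs =
      2 * ∑ k ∈ range n, ∑ t ∈ range (k + 1), f t := by
  induction n with
  | zero => simp
  | succ n ih =>
    have hrow : ∑ j ∈ range (n + 1), f ((n : ℤ) - j).natAbs = ∑ t ∈ range (n + 1), f t := by
      rw [← sum_range_reflect f]
      refine sum_congr rfl fun j hj => ?_
      rw [mem_range] at hj
      congr 1; omega
    have hcol : ∑ i ∈ range n, f ((i : ℤ) - n).natAbs = ∑ j ∈ range n, f ((n : ℤ) - j).natAbs :=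
      sum_congr rfl fun i _ => by rw [← Int.natAbs_neg, neg_sub]
    have hdiag : f ((n : ℤ) - n).natAbs = 0 := by simp [hf]
    simp only [sum_range_succ _ n, sum_add_distrib] at hrow ⊢
    rw [ih, hcol]
    linear_combination 2 * hrow - hdiag

lemma sum_fin_natAbs_sub (f : ℕ → ℝ) (hf : f 0 = 0) (n : ℕ) :
    ∑ i : Fin n, ∑ j : Fin n, f (((i : ℕ) : ℤ) - ((j : ℕ) : ℤ)).natAbs =
      2 * ∑ k ∈ range n, ∑ t ∈ range (k + 1), f t := by
  rw [Fin.sum_univ_eq_sum_range fun i => ∑ j : Fin n, f ((i : ℤ) - ((j : ℕ) : ℤ)).natAbs]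
  refine (sum_congr rfl fun i _ => ?_).trans (sum_range_natAbs_sub f hf n)
  exact Fin.sum_univ_eq_sum_range (fun j => f ((i : ℤ) - j).natAbs) n

lemma tendsto_sum_fin_natAbs_sub_div {f : ℕ → ℝ} (hf : Summable f) (h0 : f 0 = 0) :
    Tendsto (fun n : ℕ => (∑ i : Fin n, ∑ j : Fin n, f (((i : ℕ) : ℤ) - ((j : ℕ) : ℤ)).natAbs) / n)
      atTop (𝓝 (2 * ∑' t, f t)) := by
  have hpartial : Tendsto (fun k => ∑ t ∈ range (k + 1), f t) atTop (𝓝 (∑' t, f t)) :=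
    (tendsto_add_atTop_iff_nat 1).mpr hf.hasSum.tendsto_sum_nat
  convert hpartial.cesaro.const_mul 2 using 2 with n
  rw [sum_fin_natAbs_sub f h0]
  ring

lemma natCast_card_offDiag_univ_fin (n : ℕ) :
    (#(univ : Finset (Fin n)).offDiag : ℝ) = n * (n - 1) := by
  rw [offDiag_card, card_univ, Fintype.card_fin, Nat.cast_sub (Nat.le_mul_self n)]
  push_cast; ring

lemma wOne_eq (n : ℕ) :
    wOne n = ∑ i : Fin n, ∑ j : Fin n, cauchyKernel (((i : ℕ) : ℤ) - ((j : ℕ) : ℤ)).natAbs -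
      #(univ : Finset (Fin n)).offDiag := by
  have hoff : ∀ i j : Fin n,
      (if i = j then 0 else wDefault (((i : ℕ) : ℤ) - ((j : ℕ) : ℤ)).natAbs) =
        cauchyKernel (((i : ℕ) : ℤ) - ((j : ℕ) : ℤ)).natAbs -
          if (i, j) ∈ (univ : Finset (Fin n)).offDiag then 1 else 0 := by
    intro i j
    by_cases h : i = j
    · subst h; simp
    · simp only [wDefault_eq_cauchyKernel_sub, natAbs_sub_eq_zero_iff, mem_offDiag, mem_univ,
        true_and, ne_eq, h, not_false_eq_true, ↓reduceIte]
  simp only [wOne, hoff, sum_sub_distrib]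
  rw [← Fintype.sum_prod_type fun x => if x ∈ (univ : Finset (Fin n)).offDiag then (1 : ℝ) else 0,
    sum_boole, filter_mem_eq_inter, univ_inter]

lemma sum_sq_wTilde {n : ℕ} (hn : 2 ≤ n) :
    ∑ i : Fin n, ∑ j : Fin n, wTilde n i j ^ 2 =
      ∑ i : Fin n, ∑ j : Fin n, cauchyKernel (((i : ℕ) : ℤ) - ((j : ℕ) : ℤ)).natAbs ^ 2 -
        (∑ i : Fin n, ∑ j : Fin n, cauchyKernel (((i : ℕ) : ℤ) - ((j : ℕ) : ℤ)).natAbs) ^ 2 /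
          ((n : ℝ) * ((n : ℝ) - 1)) := by
  set s := (univ : Finset (Fin n)).offDiag
  set A := ∑ i : Fin n, ∑ j : Fin n, cauchyKernel (((i : ℕ) : ℤ) - ((j : ℕ) : ℤ)).natAbs
  have hcard : (#s : ℝ) = n * (n - 1) := natCast_card_offDiag_univ_fin n
  have hcard_pos : (0 : ℝ) < #s := by
    rw [hcard]
    have : (2 : ℝ) ≤ n := by exact_mod_cast hn
    nlinarith
  have hmem : ∀ i j : Fin n, (i, j) ∈ s ↔ i ≠ j := by simp [s]
  have hwOne : wOne n = A - #s := wOne_eq n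
  have hw : ∀ i j : Fin n, wTilde n i j =
      cauchyKernel (((i : ℕ) : ℤ) - ((j : ℕ) : ℤ)).natAbs - if (i, j) ∈ s then A / #s else 0 := by
    intro i j
    by_cases h : i = j
    · subst h; simp [wTilde, hmem, wDefault]
    · simp only [wTilde, wDefault_eq_cauchyKernel_sub, natAbs_sub_eq_zero_iff, hmem, ne_eq, h,
        not_false_eq_true, ↓reduceIte, hwOne, ← hcard]
      field_simp; ring
  simp only [hw]
  rw [← hcard]
  simpa only [Fintype.sum_prod_type] using
    sum_sq_sub_indicator_mean s (fun x => cauchyKernel (((x.1 : ℕ) : ℤ) - ((x.2 : ℕ) : ℤ)).natAbs)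
      fun x hx => by simp_all [s]

/-- for the default weight `w(t) = 1/(1+t²) − 1` with centered
version `w̃_{ij}`, one has
`lim_{n→∞} (1/n) Σ_{i,j} w̃_{ij}² = 2 Σ_{t=1}^∞ 1/(1+t²)²`. -/
theorem centered_default_weight_sum_of_squares :
    Tendsto (fun n : ℕ => (∑ i : Fin n, ∑ j : Fin n, (wTilde n i j) ^ 2) / (n : ℝ))
      atTop
      (nhds (2 * ∑' t : ℕ, 1 / (1 + ((t : ℝ) + 1) ^ 2) ^ 2)) := by
  have hsq := tendsto_sum_fin_natAbs_sub_div summable_cauchyKernel_sq (by simp)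
  have hlin := tendsto_sum_fin_natAbs_sub_div summable_cauchyKernel cauchyKernel_zero
  have hinv : Tendsto (fun n : ℕ => ((n : ℝ) - 1)⁻¹) atTop (𝓝 0) :=
    (tendsto_atTop_add_const_right atTop (-1) tendsto_natCast_atTop_atTop).inv_tendsto_atTop
  have hlim := hsq.sub ((hlin.pow 2).mul hinv)
  rw [mul_zero, sub_zero, tsum_cauchyKernel_sq] at hlim
  refine hlim.congr' ?_
  filter_upwards [eventually_ge_atTop 2] with n hn
  have : (2 : ℝ) ≤ n := by exact_mod_cast hn
  rw [sum_sq_wTilde hn]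
  field_simp
end

section
/- Fix α > 0 and, for each n ≥ 2, define the symmetric matrix S⁽ⁿ⁾ with entries S_{ij} = 1 − 1/(1+|i−j|^α) for i,j ∈ {1,…,n}. Let w̃_{ij} be the centered default weights. Then lim_{n→∞} (1/n) Σ_{i=1}^n Σ_{j=1}^n w̃_{ij} S_{ij} = −2 Σ_{t=1}^∞ 1/((1+t²)(1+t^α)); in particular this limit is a nonzero constant, so |tr(W̃ᵀS⁽ⁿ⁾)|/√n → ∞ as n → ∞. -/
open Finset Filter

/-- The matrix with entries `S_{ij} = 1 − 1/(1+|i−j|^α)`. -/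
noncomputable def Salpha (α : ℝ) (n : ℕ) (i j : Fin n) : ℝ :=
  1 - 1 / (1 + (|((i : ℕ) : ℝ) - ((j : ℕ) : ℝ)|) ^ α)

/-- `tr(W̃ᵀS) = Σ_{i,j} w̃_{ij} S_{ij}`. -/
noncomputable def trWS (α : ℝ) (n : ℕ) : ℝ :=
  ∑ i : Fin n, ∑ j : Fin n, wTilde n i j * Salpha α n i j

open Topology

/-!
All matrices involved are Toeplitz, so every double sum is governed by the sums
`∑_{j < i < n} F (i - j)` of its kernel; by Cesàro, such a sum divided by `n` tends to
`∑_{t ≥ 1} F t` when this series converges. Write `q t = 1/(1+t²)`, so that `w = q - 1`, and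
`u t = 1/(1+t^α)`. The centering constant `c` is chosen so that `∑_{i ≠ j} (w - c) = 0`; expanding
`(w - c)(1 - u) = (w - c) - q u + (1 + c) u` therefore leaves
`tr(W̃ᵀS) = 2 ((1 + c) U_n - G_n)` with `U_n, G_n` the lower sums of `u` and `q u`.
Here `G_n / n → ∑ q u`, while `1 + c = Q_n / T_n` (lower sums of `q` and `1`, `T_n = n(n-1)/2`)
gives `(1 + c) U_n / n = (Q_n / n) (U_n / T_n)`, with `Q_n / n → ∑ q` and `U_n / T_n → 0` because
`u → 0`. Hence `tr(W̃ᵀS) / n → -2 ∑ q u < 0`, and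
`|tr(W̃ᵀS)| / √n = |tr(W̃ᵀS) / n| √n → ∞`.
-/

/-- `∑_{j < i < n} F (i - j)`, the strictly lower part of the entry sum of the Toeplitz matrix
`(F |i - j|)_{i, j < n}`. -/
def toeplitzLowerSum {M : Type*} [AddCommMonoid M] (F : ℕ → M) (n : ℕ) : M :=
  ∑ i ∈ range n, ∑ t ∈ range i, F (t + 1)

section AddCommMonoid

variable {M : Type*} [AddCommMonoid M]

theorem toeplitzLowerSum_succ (F : ℕ → M) (n : ℕ) :
    toeplitzLowerSum F (n + 1) = toeplitzLowerSum F n + ∑ t ∈ range n, F (t + 1) :=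
  sum_range_succ _ _

theorem sum_range_natAbs_natCast_sub (F : ℕ → M) (n : ℕ) :
    ∑ j ∈ range n, F ((n : ℤ) - j).natAbs = ∑ t ∈ range n, F (t + 1) := by
  rw [← sum_range_reflect (fun t => F (t + 1)) n]
  refine sum_congr rfl fun j hj => ?_
  have := mem_range.1 hj
  congr 1
  omega

theorem sum_range_sum_range_natAbs_sub (F : ℕ → M) (n : ℕ) :
    ∑ i ∈ range n, ∑ j ∈ range n, F ((i : ℤ) - j).natAbs =
      n • F 0 + 2 • toeplitzLowerSum F n := by
  induction n with
  | zero => simp [toeplitzLowerSum]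
  | succ n ih =>
    have hcol : ∑ i ∈ range n, F ((i : ℤ) - n).natAbs = ∑ t ∈ range n, F (t + 1) := by
      rw [← sum_range_natAbs_natCast_sub]
      exact sum_congr rfl fun i _ => by rw [← Int.natAbs_neg, neg_sub]
    simp only [sum_range_succ, sum_add_distrib, ih, hcol, sum_range_natAbs_natCast_sub,
      toeplitzLowerSum_succ, sub_self, Int.natAbs_zero, succ_nsmul, nsmul_add]
    abel

theorem sum_fin_natAbs_sub_s13 (F : ℕ → M) (n : ℕ) :
    ∑ i : Fin n, ∑ j : Fin n, F (((i : ℕ) : ℤ) - ((j : ℕ) : ℤ)).natAbs =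
      n • F 0 + 2 • toeplitzLowerSum F n := by
  rw [← sum_range_sum_range_natAbs_sub,
    Fin.sum_univ_eq_sum_range (fun i => ∑ j : Fin n, F ((i : ℤ) - ((j : ℕ) : ℤ)).natAbs)]
  exact sum_congr rfl fun i _ => Fin.sum_univ_eq_sum_range (fun j => F ((i : ℤ) - j).natAbs) n

theorem toeplitzLowerSum_add (F G : ℕ → M) (n : ℕ) :
    toeplitzLowerSum (fun t => F t + G t) n = toeplitzLowerSum F n + toeplitzLowerSum G n := by
  simp only [toeplitzLowerSum, sum_add_distrib]

end AddCommMonoid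

theorem toeplitzLowerSum_sub {M : Type*} [AddCommGroup M] (F G : ℕ → M) (n : ℕ) :
    toeplitzLowerSum (fun t => F t - G t) n = toeplitzLowerSum F n - toeplitzLowerSum G n := by
  simp only [toeplitzLowerSum, sum_sub_distrib]

theorem toeplitzLowerSum_mul_left {R : Type*} [NonUnitalNonAssocSemiring R] (c : R) (F : ℕ → R)
    (n : ℕ) : toeplitzLowerSum (fun t => c * F t) n = c * toeplitzLowerSum F n := by
  simp only [toeplitzLowerSum, mul_sum]

theorem toeplitzLowerSum_one (n : ℕ) :
    toeplitzLowerSum (fun _ => (1 : ℝ)) n = n * (n - 1) / 2 := by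
  induction n with
  | zero => simp [toeplitzLowerSum]
  | succ n ih =>
    rw [toeplitzLowerSum_succ, ih]
    simp only [sum_const, card_range, nsmul_eq_mul, mul_one, Nat.cast_add_one]
    ring

theorem toeplitzLowerSum_one_pos {n : ℕ} (hn : 2 ≤ n) :
    0 < toeplitzLowerSum (fun _ => (1 : ℝ)) n := by
  have : (2 : ℝ) ≤ n := by exact_mod_cast hn
  rw [toeplitzLowerSum_one]
  nlinarith

theorem toeplitzLowerSum_nonneg {F : ℕ → ℝ} (hF : ∀ t, 0 ≤ F t) (n : ℕ) :
    0 ≤ toeplitzLowerSum F n :=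
  sum_nonneg fun _ _ => sum_nonneg fun t _ => hF (t + 1)

theorem toeplitzLowerSum_le {F : ℕ → ℝ} (hF : ∀ t, 0 ≤ F t) (n : ℕ) :
    toeplitzLowerSum F n ≤ n * ∑ t ∈ range n, F (t + 1) := by
  calc toeplitzLowerSum F n ≤ ∑ _i ∈ range n, ∑ t ∈ range n, F (t + 1) :=
        sum_le_sum fun i hi => sum_le_sum_of_subset_of_nonneg
          (range_subset_range.2 (mem_range.1 hi).le) fun t _ _ => hF (t + 1)
    _ = n * ∑ t ∈ range n, F (t + 1) := by rw [sum_const, card_range, nsmul_eq_mul]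

theorem tendsto_toeplitzLowerSum_div {F : ℕ → ℝ} {L : ℝ} (hF : HasSum (fun t => F (t + 1)) L) :
    Tendsto (fun n : ℕ => toeplitzLowerSum F n / n) atTop (𝓝 L) := by
  simpa only [toeplitzLowerSum, div_eq_inv_mul] using hF.tendsto_sum_nat.cesaro

theorem tendsto_toeplitzLowerSum_div_toeplitzLowerSum_one {F : ℕ → ℝ} (hF0 : ∀ t, 0 ≤ F t)
    (hF : Tendsto F atTop (𝓝 0)) :
    Tendsto (fun n : ℕ => toeplitzLowerSum F n / toeplitzLowerSum (fun _ => 1) n)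
      atTop (𝓝 0) := by
  have hmean : Tendsto (fun n : ℕ => 4 * ((n : ℝ)⁻¹ * ∑ t ∈ range n, F (t + 1))) atTop (𝓝 0) := by
    simpa using ((tendsto_add_atTop_iff_nat 1).2 hF).cesaro.const_mul 4
  refine squeeze_zero' ?_ ?_ hmean
  · exact Eventually.of_forall fun n => div_nonneg (toeplitzLowerSum_nonneg hF0 n)
      (toeplitzLowerSum_nonneg (fun _ => zero_le_one) n)
  · filter_upwards [eventually_ge_atTop 2] with n hn
    have hn' : (2 : ℝ) ≤ n := by exact_mod_cast hn
    have hP : 0 ≤ ∑ t ∈ range n, F (t + 1) := sum_nonneg fun t _ => hF0 _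
    rw [div_le_iff₀ (toeplitzLowerSum_one_pos hn), toeplitzLowerSum_one]
    calc toeplitzLowerSum F n ≤ n * ∑ t ∈ range n, F (t + 1) := toeplitzLowerSum_le hF0 n
      _ ≤ 4 * ((n : ℝ)⁻¹ * ∑ t ∈ range n, F (t + 1)) * (n * (n - 1) / 2) := by
        field_simp
        nlinarith

theorem tendsto_abs_div_sqrt_atTop {a : ℕ → ℝ} {l : ℝ} (hl : l ≠ 0)
    (ha : Tendsto (fun n : ℕ => a n / n) atTop (𝓝 l)) :
    Tendsto (fun n : ℕ => |a n| / √(n : ℝ)) atTop atTop := by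
  have hsqrt : Tendsto (fun n : ℕ => √(n : ℝ)) atTop atTop :=
    Real.tendsto_sqrt_atTop.comp tendsto_natCast_atTop_atTop
  refine (Tendsto.pos_mul_atTop (abs_pos.2 hl) ha.abs hsqrt).congr' ?_
  filter_upwards [eventually_ge_atTop 1] with n hn
  have hn : (0 : ℝ) < n := by exact_mod_cast hn
  rw [abs_div, abs_of_pos hn, div_mul_eq_mul_div, div_eq_div_iff hn.ne' (Real.sqrt_pos.2 hn).ne',
    mul_assoc, Real.mul_self_sqrt hn.le]

theorem wDefault_zero : wDefault 0 = 0 := by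
  simp [wDefault]

theorem wOne_eq_two_mul_toeplitzLowerSum (n : ℕ) : wOne n = 2 * toeplitzLowerSum wDefault n := by
  have hdiag :
      wOne n = ∑ i : Fin n, ∑ j : Fin n, wDefault (((i : ℕ) : ℤ) - ((j : ℕ) : ℤ)).natAbs :=
    sum_congr rfl fun i _ => sum_congr rfl fun j _ => by
      split_ifs with h <;> simp [h, wDefault_zero]
  rw [hdiag, sum_fin_natAbs_sub_s13, wDefault_zero, smul_zero, zero_add, nsmul_eq_mul, Nat.cast_ofNat]

theorem Salpha_eq_natAbs (α : ℝ) {n : ℕ} (i j : Fin n) :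
    Salpha α n i j = 1 - 1 / (1 + ((((i : ℕ) : ℤ) - ((j : ℕ) : ℤ)).natAbs : ℝ) ^ α) := by
  rw [Salpha, Nat.cast_natAbs]
  push_cast
  rfl

theorem one_add_wOne_div_mul_toeplitzLowerSum_one {n : ℕ} (hn : 2 ≤ n) :
    (1 + wOne n / ((n : ℝ) * ((n : ℝ) - 1))) * toeplitzLowerSum (fun _ => 1) n =
      toeplitzLowerSum (fun t => 1 / (1 + (t : ℝ) ^ 2)) n := by
  have hq : toeplitzLowerSum (fun t => 1 / (1 + (t : ℝ) ^ 2)) n =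
      toeplitzLowerSum wDefault n + toeplitzLowerSum (fun _ => 1) n := by
    rw [← toeplitzLowerSum_add]
    simp only [wDefault, sub_add_cancel]
  have hn' : (2 : ℝ) ≤ n := by exact_mod_cast hn
  have hn0 : (n : ℝ) ≠ 0 := by positivity
  have hn1 : (n : ℝ) - 1 ≠ 0 := by linarith
  rw [hq, wOne_eq_two_mul_toeplitzLowerSum, toeplitzLowerSum_one]
  field_simp
  ring

theorem trWS_eq_toeplitzLowerSum (α : ℝ) {n : ℕ} (hn : 2 ≤ n) :
    trWS α n = 2 * (toeplitzLowerSum (fun t => 1 / (1 + (t : ℝ) ^ 2)) n /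
        toeplitzLowerSum (fun _ => 1) n * toeplitzLowerSum (fun t => 1 / (1 + (t : ℝ) ^ α)) n -
      toeplitzLowerSum (fun t => 1 / ((1 + (t : ℝ) ^ 2) * (1 + (t : ℝ) ^ α))) n) := by
  set c := wOne n / ((n : ℝ) * ((n : ℝ) - 1)) with hc
  set F : ℕ → ℝ := fun d => if d = 0 then 0 else (wDefault d - c) * (1 - 1 / (1 + (d : ℝ) ^ α))
  have hentry : ∀ i j : Fin n,
      wTilde n i j * Salpha α n i j = F (((i : ℕ) : ℤ) - ((j : ℕ) : ℤ)).natAbs := by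
    intro i j
    by_cases h : i = j
    · simp [h, F, wTilde, wDefault_zero]
    · have hd : (((i : ℕ) : ℤ) - ((j : ℕ) : ℤ)).natAbs ≠ 0 := by
        simpa [sub_eq_zero, Fin.val_inj] using h
      simp only [wTilde, Salpha_eq_natAbs, F, if_neg h, if_neg hd, ← hc]
  have htr : trWS α n = 2 * toeplitzLowerSum F n := by
    rw [trWS, sum_congr rfl fun i _ => sum_congr rfl fun j _ => hentry i j, sum_fin_natAbs_sub_s13]
    simp [F]
  have hF : toeplitzLowerSum F n = toeplitzLowerSum (fun t =>
      1 / (1 + (t : ℝ) ^ 2) - (1 + c) * 1 - 1 / ((1 + (t : ℝ) ^ 2) * (1 + (t : ℝ) ^ α)) +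
        (1 + c) * (1 / (1 + (t : ℝ) ^ α))) n := by
    refine sum_congr rfl fun i _ => sum_congr rfl fun t _ => ?_
    have : (0 : ℝ) < 1 + ((t + 1 : ℕ) : ℝ) ^ α := by positivity
    simp only [F, wDefault, Nat.add_one_ne_zero, if_false]
    field_simp
    ring
  rw [htr, hF, toeplitzLowerSum_add, toeplitzLowerSum_sub, toeplitzLowerSum_sub,
    toeplitzLowerSum_mul_left, toeplitzLowerSum_mul_left,
    ← one_add_wOne_div_mul_toeplitzLowerSum_one hn, ← hc]
  field_simp [(toeplitzLowerSum_one_pos hn).ne']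
  ring

theorem summable_one_div_one_add_succ_sq :
    Summable fun t : ℕ => 1 / (1 + ((t : ℝ) + 1) ^ 2) := by
  have h := (summable_nat_add_iff 1).2 (Real.summable_one_div_nat_pow.2 one_lt_two)
  refine h.of_nonneg_of_le (fun t => by positivity) fun t => ?_
  push_cast
  exact one_div_le_one_div_of_le (by positivity) (by linarith)

theorem tendsto_one_div_one_add_rpow {α : ℝ} (hα : 0 < α) :
    Tendsto (fun t : ℕ => 1 / (1 + (t : ℝ) ^ α)) atTop (𝓝 0) := by
  simpa only [one_div, Function.comp_def] using tendsto_inv_atTop_zero.comp <|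
    tendsto_atTop_add_const_left _ 1 ((tendsto_rpow_atTop hα).comp tendsto_natCast_atTop_atTop)

/-- fix `α > 0` and take `S_{ij} = 1 − 1/(1+|i−j|^α)`.  Then
`(1/n) Σ_{i,j} w̃_{ij} S_{ij} → −2 Σ_{t=1}^∞ 1/((1+t²)(1+t^α))`, this limit is a
nonzero constant, and consequently `|tr(W̃ᵀS⁽ⁿ⁾)|/√n → ∞` as `n → ∞`. -/
theorem trace_alignment_limit (α : ℝ) (hα : 0 < α) :
    Tendsto (fun n : ℕ => trWS α n / (n : ℝ)) atTop
        (nhds (-2 * ∑' t : ℕ,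
          1 / ((1 + ((t : ℝ) + 1) ^ 2) * (1 + ((t : ℝ) + 1) ^ α)))) ∧
      (-2 * ∑' t : ℕ,
          1 / ((1 + ((t : ℝ) + 1) ^ 2) * (1 + ((t : ℝ) + 1) ^ α))) ≠ 0 ∧
      Tendsto (fun n : ℕ => |trWS α n| / Real.sqrt (n : ℝ)) atTop atTop := by
  have hsum : Summable fun t : ℕ => 1 / ((1 + ((t : ℝ) + 1) ^ 2) * (1 + ((t : ℝ) + 1) ^ α)) :=
    summable_one_div_one_add_succ_sq.of_nonneg_of_le (fun t => by positivity) fun t =>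
      one_div_le_one_div_of_le (by positivity) (le_mul_of_one_le_right (by positivity)
        (le_add_of_nonneg_right (by positivity)))
  set L := ∑' t : ℕ, 1 / ((1 + ((t : ℝ) + 1) ^ 2) * (1 + ((t : ℝ) + 1) ^ α))
  have hpos : 0 < L :=
    hsum.tsum_pos (fun t => by positivity) 0 (by positivity)
  have hparts := (((tendsto_toeplitzLowerSum_div (F := fun t => 1 / (1 + (t : ℝ) ^ 2))
      (by simpa only [Nat.cast_add_one] using summable_one_div_one_add_succ_sq.hasSum)).mul
    (tendsto_toeplitzLowerSum_div_toeplitzLowerSum_one (fun t => by positivity)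
      (tendsto_one_div_one_add_rpow hα))).sub
    (tendsto_toeplitzLowerSum_div (F := fun t => 1 / ((1 + (t : ℝ) ^ 2) * (1 + (t : ℝ) ^ α)))
      (by simpa only [Nat.cast_add_one] using hsum.hasSum))).const_mul 2
  rw [mul_zero, zero_sub, mul_neg, ← neg_mul] at hparts
  have hlim : Tendsto (fun n : ℕ => trWS α n / n) atTop (𝓝 (-2 * L)) := hparts.congr' <| by
    filter_upwards [eventually_ge_atTop 2] with n hn
    rw [trWS_eq_toeplitzLowerSum α hn]
    ring
  exact ⟨hlim, by linarith, tendsto_abs_div_sqrt_atTop (by linarith) hlim⟩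
end
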